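/- arXiv:1404.3614 — 5 statements merged into one kernel-verified Lean document; each statement's English description precedes it below -/
import Mathlib

section
/- If C, D are symmetric positive definite d×d matrices with C ⪯ D, then 0 ≤ tr(D − C) ≤ tr[D(C⁻¹ − D⁻¹)C] ≤ (tr D)·tr(C⁻¹ − D⁻¹)·(tr C) ≤ (tr D)²·tr(C⁻¹ − D⁻¹). -/
/-!
Since `D (C⁻¹ - D⁻¹) C = D - C`, the second inequality is an equality. Write the positive
semidefinite matrix `C⁻¹ - D⁻¹` as `SᵀS`; then `tr (D (C⁻¹ - D⁻¹) C)` is the Frobenius inner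
product of `SD` and `SC`, so Cauchy–Schwarz and submultiplicativity of the Frobenius norm bound
it by `‖S‖² ‖D‖ ‖C‖`, where `‖S‖² = tr (C⁻¹ - D⁻¹)` and `‖A‖ ≤ tr A` for positive semidefinite `A`.
The last inequality is `tr C ≤ tr D`.
-/

open Matrix

namespace Matrix

variable {m n : Type*} [Fintype m] [Fintype n]

theorem posSemidef_sub_of_forall_mulVec_dotProduct_le {A B : Matrix n n ℝ} (hA : A.IsHermitian)
    (hB : B.IsHermitian) (hAB : ∀ u, A *ᵥ u ⬝ᵥ u ≤ B *ᵥ u ⬝ᵥ u) : (B - A).PosSemidef := by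
  refine .of_dotProduct_mulVec_nonneg (hB.sub hA) fun u => ?_
  rw [star_trivial, sub_mulVec, dotProduct_sub, sub_nonneg, dotProduct_comm, dotProduct_comm u]
  exact hAB u

/- `[[B, 1], [1, A⁻¹]]` is positive semidefinite iff its Schur complement `B - A` with respect
to `A⁻¹` is, iff its Schur complement `A⁻¹ - B⁻¹` with respect to `B` is. -/
open scoped ComplexOrder in
theorem PosDef.posSemidef_inv_sub_inv {𝕜 : Type*} [RCLike 𝕜] [DecidableEq n]
    {A B : Matrix n n 𝕜} (hA : A.PosDef) (hB : B.PosDef) (hAB : (B - A).PosSemidef) :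
    (A⁻¹ - B⁻¹).PosSemidef := by
  have := hA.isUnit.invertible
  have := hB.isUnit.invertible
  have := hA.inv.isUnit.invertible
  have hblock := (PosDef.fromBlocks₂₂ B 1 hA.inv).mpr (by simpa using hAB)
  simpa using (PosDef.fromBlocks₁₁ 1 A⁻¹ hB).mp (by simpa using hblock)

theorem mul_inv_sub_inv_mul_eq_sub {R : Type*} [CommRing R] [DecidableEq n]
    {A B : Matrix n n R} (hA : IsUnit A.det) (hB : IsUnit B.det) :
    B * (A⁻¹ - B⁻¹) * A = B - A := by
  rw [Matrix.mul_sub, Matrix.sub_mul, Matrix.mul_assoc, nonsing_inv_mul _ hA, Matrix.mul_one,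
    mul_nonsing_inv _ hB, Matrix.one_mul]

open scoped MatrixOrder in
theorem PosSemidef.exists_eq_transpose_mul_self {A : Matrix n n ℝ} (hA : A.PosSemidef) :
    ∃ B : Matrix n n ℝ, A = Bᵀ * B := by
  classical
  obtain ⟨B, hB⟩ := CStarAlgebra.nonneg_iff_eq_star_mul_self.mp hA.nonneg
  rw [star_eq_conjTranspose, conjTranspose_eq_transpose_of_trivial] at hB
  exact ⟨B, hB⟩

section Frobenius

attribute [local instance] frobeniusNormedAddCommGroup

theorem frobenius_norm_sq_eq_trace (A : Matrix m n ℝ) : ‖A‖ ^ 2 = (Aᵀ * A).trace := by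
  rw [← vec_dotProduct_vec, frobenius_norm_def, ← Real.rpow_natCast,
    ← Real.rpow_mul (by positivity)]
  simp [dotProduct, vec, Fintype.sum_prod_type, Finset.sum_comm (γ := m), sq]

theorem trace_transpose_mul_le_frobenius_norm_mul (A B : Matrix m n ℝ) :
    (Aᵀ * B).trace ≤ ‖A‖ * ‖B‖ := by
  have hsq : (Aᵀ * B).trace ^ 2 ≤ (‖A‖ * ‖B‖) ^ 2 := by
    rw [mul_pow, frobenius_norm_sq_eq_trace, frobenius_norm_sq_eq_trace, ← vec_dotProduct_vec,
      ← vec_dotProduct_vec, ← vec_dotProduct_vec]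
    simpa only [dotProduct, sq] using Finset.sum_mul_sq_le_sq_mul_sq Finset.univ (vec A) (vec B)
  exact le_of_sq_le_sq hsq (by positivity)

theorem PosSemidef.frobenius_norm_le_trace {A : Matrix n n ℝ} (hA : A.PosSemidef) :
    ‖A‖ ≤ A.trace := by
  obtain ⟨B, rfl⟩ := hA.exists_eq_transpose_mul_self
  calc ‖Bᵀ * B‖ ≤ ‖Bᵀ‖ * ‖B‖ := frobenius_norm_mul _ _
    _ = (Bᵀ * B).trace := by rw [frobenius_norm_transpose, ← sq, frobenius_norm_sq_eq_trace]

theorem PosSemidef.trace_mul_mul_le {A M B : Matrix n n ℝ} (hA : A.PosSemidef)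
    (hM : M.PosSemidef) (hB : B.PosSemidef) :
    (A * M * B).trace ≤ A.trace * M.trace * B.trace := by
  obtain ⟨S, rfl⟩ := hM.exists_eq_transpose_mul_self
  have hAt : Aᵀ = A := by simpa using hA.isHermitian.eq
  calc (A * (Sᵀ * S) * B).trace = ((S * A)ᵀ * (S * B)).trace := by
        rw [transpose_mul, hAt]; simp only [Matrix.mul_assoc]
    _ ≤ ‖S * A‖ * ‖S * B‖ := trace_transpose_mul_le_frobenius_norm_mul _ _
    _ ≤ (‖S‖ * ‖A‖) * (‖S‖ * ‖B‖) := by gcongr <;> exact frobenius_norm_mul _ _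
    _ = ‖A‖ * (Sᵀ * S).trace * ‖B‖ := by rw [← frobenius_norm_sq_eq_trace]; ring
    _ ≤ A.trace * (Sᵀ * S).trace * B.trace := by
        gcongr
        exacts [mul_nonneg hA.trace_nonneg hM.trace_nonneg, hM.trace_nonneg,
          hA.frobenius_norm_le_trace, hB.frobenius_norm_le_trace]

end Frobenius

end Matrix

/-- If `C, D` are symmetric positive definite `d×d` matrices with `C ⪯ D` (Löwner order), then
`0 ≤ tr(D − C) ≤ tr[D(C⁻¹ − D⁻¹)C] ≤ (tr D)·tr(C⁻¹ − D⁻¹)·(tr C) ≤ (tr D)²·tr(C⁻¹ − D⁻¹)`. -/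
theorem stmt_1 {d : ℕ} (C D : Matrix (Fin d) (Fin d) ℝ)
    (hC : C.PosDef) (hD : D.PosDef)
    (hCD : ∀ u : Fin d → ℝ, C.mulVec u ⬝ᵥ u ≤ D.mulVec u ⬝ᵥ u) :
    0 ≤ (D - C).trace ∧
    (D - C).trace ≤ (D * (C⁻¹ - D⁻¹) * C).trace ∧
    (D * (C⁻¹ - D⁻¹) * C).trace ≤ D.trace * (C⁻¹ - D⁻¹).trace * C.trace ∧
    D.trace * (C⁻¹ - D⁻¹).trace * C.trace ≤ D.trace ^ 2 * (C⁻¹ - D⁻¹).trace := by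
  have hDC : (D - C).PosSemidef :=
    posSemidef_sub_of_forall_mulVec_dotProduct_le hC.isHermitian hD.isHermitian hCD
  have hM : (C⁻¹ - D⁻¹).PosSemidef := hC.posSemidef_inv_sub_inv hD hDC
  have htrace : C.trace ≤ D.trace := by
    simpa [trace_sub] using hDC.trace_nonneg
  refine ⟨hDC.trace_nonneg, ?_, hD.posSemidef.trace_mul_mul_le hM hC.posSemidef, ?_⟩
  · rw [mul_inv_sub_inv_mul_eq_sub hC.det_pos.ne'.isUnit hD.det_pos.ne'.isUnit]
  · calc D.trace * (C⁻¹ - D⁻¹).trace * C.trace ≤ D.trace * (C⁻¹ - D⁻¹).trace * D.trace :=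
          mul_le_mul_of_nonneg_left htrace
            (mul_nonneg hD.posSemidef.trace_nonneg hM.trace_nonneg)
      _ = D.trace ^ 2 * (C⁻¹ - D⁻¹).trace := by ring
end

section
/- Let H be a real Hilbert space with an orthogonal decomposition H = U ⊕ E ⊕ J where U is isometrically isomorphic to R^d, and let A: H → H be a symmetric, bounded, coercive linear operator. Define matrices A_H, B_H ∈ R^{d×d} by ⟨A_H E, E⟩ = min_{e∈E} ⟨A(E+e), E+e⟩_H and ⟨B_H J, J⟩ = min_{j∈J} ⟨A⁻¹(J+j), J+j⟩_H for all E, J ∈ R^d (identifying R^d with U). Then A_H = B_H⁻¹. -/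
/-!
Let `x = ι E + e` minimize `⟪A x, x⟫` over `ι E + sE`. First-order optimality makes `A x`
orthogonal to `sE`, so `A x = ι J + j` with `j ∈ sJ`, and polarizing the minimum identifies
`A_H E = J`. Conversely `A⁻¹ (ι J + j) = x` is orthogonal to `sJ`, so it is the minimizer of the
dual problem for `J`, whence `B_H J = E`. Thus `B_H A_H = 1`.
-/

open scoped RealInnerProductSpace

section Energy

variable {H : Type*} [NormedAddCommGroup H] [InnerProductSpace ℝ H]

def energyOn (T : H →ₗ[ℝ] H) (s : Submodule ℝ H) (x : H) : Set ℝ :=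
  {r | ∃ e ∈ s, r = ⟪T (x + e), x + e⟫}

variable {T : H →ₗ[ℝ] H} {s : Submodule ℝ H} {x : H}

lemma LinearMap.IsSymmetric.inner_map_add_add (hT : T.IsSymmetric) (x y : H) :
    ⟪T (x + y), x + y⟫ = ⟪T x, x⟫ + 2 * ⟪T x, y⟫ + ⟪T y, y⟫ := by
  have h : ⟪T y, x⟫ = ⟪T x, y⟫ := by rw [hT y x, real_inner_comm]
  simp only [map_add, inner_add_left, inner_add_right]
  linarith

/-- First-order optimality: `t ↦ ⟪T (x + t e), x + t e⟫` is a quadratic with a minimum at `0`,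
so its linear coefficient vanishes. -/
lemma LinearMap.IsSymmetric.inner_map_eq_zero_of_le (hT : T.IsSymmetric)
    (hx : ∀ e ∈ s, ⟪T x, x⟫ ≤ ⟪T (x + e), x + e⟫) {e : H} (he : e ∈ s) : ⟪T x, e⟫ = 0 := by
  have hquad : ∀ t : ℝ, 0 ≤ ⟪T e, e⟫ * (t * t) + 2 * ⟪T x, e⟫ * t + 0 := fun t => by
    have := hx (t • e) (s.smul_mem t he)
    rw [hT.inner_map_add_add, map_smul, real_inner_smul_right, real_inner_smul_left,
      real_inner_smul_right] at this
    linarith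
  have := discrim_le_zero hquad
  rw [discrim] at this
  nlinarith [sq_nonneg ⟪T x, e⟫]

lemma LinearMap.IsPositive.le_inner_map_add (hT : T.IsPositive)
    (hx : ∀ e ∈ s, ⟪T x, e⟫ = 0) {e : H} (he : e ∈ s) : ⟪T x, x⟫ ≤ ⟪T (x + e), x + e⟫ := by
  rw [hT.isSymmetric.inner_map_add_add, hx e he]
  linarith [hT.inner_nonneg_left e]

lemma exists_orthogonal_of_isLeast_energyOn (hT : T.IsSymmetric) {m : ℝ}
    (hm : IsLeast (energyOn T s x) m) :
    ∃ e ∈ s, ∀ e' ∈ s, ⟪T (x + e), e'⟫ = 0 := by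
  obtain ⟨⟨e, he, rfl⟩, hlow⟩ := hm
  refine ⟨e, he, fun e' he' => hT.inner_map_eq_zero_of_le (fun e'' he'' => ?_) he'⟩
  exact hlow ⟨e + e'', s.add_mem he he'', by rw [add_assoc]⟩

lemma isLeast_energyOn_of_orthogonal (hT : T.IsPositive) {e : H} (he : e ∈ s)
    (horth : ∀ e' ∈ s, ⟪T (x + e), e'⟫ = 0) :
    IsLeast (energyOn T s x) ⟪T (x + e), x + e⟫ := by
  refine ⟨⟨e, he, rfl⟩, ?_⟩
  rintro _ ⟨e', he', rfl⟩
  simpa using hT.le_inner_map_add horth (s.sub_mem he' he)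

end Energy

section Reduced

variable {F H : Type*} [NormedAddCommGroup F] [InnerProductSpace ℝ F]
  [NormedAddCommGroup H] [InnerProductSpace ℝ H]
  {T : H →ₗ[ℝ] H} {s : Submodule ℝ H} {L : F →ₗᵢ[ℝ] H} {M : F →ₗ[ℝ] F}

/-- Polarization of `⟪M y, y⟫ = min_{e ∈ s} ⟪T (L y + e), L y + e⟫`: orthogonal minimizers add up,
so the identity for `y`, `v` and `y + v` leaves only the cross terms. -/
lemma inner_eq_of_isLeast_energyOn (hT : T.IsPositive) (hM : M.IsSymmetric)
    (hmin : ∀ y, IsLeast (energyOn T s (L y)) ⟪M y, y⟫) {y : F} {e : H} (he : e ∈ s)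
    (horth : ∀ e' ∈ s, ⟪T (L y + e), e'⟫ = 0) (v : F) :
    ⟪M y, v⟫ = ⟪T (L y + e), L v⟫ := by
  obtain ⟨e', he', horth'⟩ := exists_orthogonal_of_isLeast_energyOn hT.isSymmetric (hmin v)
  have hsum : L (y + v) + (e + e') = (L y + e) + (L v + e') := by rw [map_add]; abel
  have horth_sum : ∀ e'' ∈ s, ⟪T (L (y + v) + (e + e')), e''⟫ = 0 := fun e'' he'' => by
    rw [hsum, map_add, inner_add_left, horth e'' he'', horth' e'' he'', add_zero]
  have value : ∀ {z : F} {f : H}, f ∈ s → (∀ e'' ∈ s, ⟪T (L z + f), e''⟫ = 0) →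
      ⟪M z, z⟫ = ⟪T (L z + f), L z + f⟫ := fun hf horth_f =>
    (hmin _).unique (isLeast_energyOn_of_orthogonal hT hf horth_f)
  have hy := value he horth
  have hv := value he' horth'
  have hyv := value (s.add_mem he he') horth_sum
  have hcross : ⟪T (L y + e), L v + e'⟫ = ⟪T (L y + e), L v⟫ := by
    rw [inner_add_right, horth e' he', add_zero]
  rw [hsum, hT.isSymmetric.inner_map_add_add, hM.inner_map_add_add, hcross] at hyv
  linarith

lemma apply_eq_of_isLeast_energyOn (hT : T.IsPositive) (hM : M.IsSymmetric)
    (hmin : ∀ y, IsLeast (energyOn T s (L y)) ⟪M y, y⟫) {y z : F} {e w : H} (he : e ∈ s)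
    (horth : ∀ e' ∈ s, ⟪T (L y + e), e'⟫ = 0) (hTy : T (L y + e) = L z + w)
    (hw : ∀ v, ⟪w, L v⟫ = 0) : M y = z :=
  ext_inner_right ℝ fun v => by
    rw [inner_eq_of_isLeast_energyOn hT hM hmin he horth, hTy, inner_add_left, hw, add_zero,
      L.inner_map_map]

end Reduced

lemma LinearMap.IsPositive.of_rightInverse {H : Type*} [NormedAddCommGroup H]
    [InnerProductSpace ℝ H] {A B : H →ₗ[ℝ] H} (hA : A.IsPositive) (hAB : ∀ u, A (B u) = u) :
    B.IsPositive := by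
  refine (LinearMap.isPositive_iff B).mpr ⟨fun u v => ?_, fun u => ?_⟩
  · calc ⟪B u, v⟫ = ⟪B u, A (B v)⟫ := by rw [hAB]
      _ = ⟪A (B u), B v⟫ := (hA.isSymmetric _ _).symm
      _ = ⟪u, B v⟫ := by rw [hAB]
  · simpa only [hAB, real_inner_comm] using hA.inner_nonneg_left (B u)

lemma Matrix.mul_eq_one_of_toEuclideanLin_apply {n : Type*} [Fintype n] [DecidableEq n]
    {A B : Matrix n n ℝ} (h : ∀ x, toEuclideanLin B (toEuclideanLin A x) = x) : B * A = 1 := by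
  apply toEuclideanLin.injective
  ext x : 1
  simpa [toLpLin_apply, mulVec_mulVec] using h x

section Duality

variable {F H : Type*} [NormedAddCommGroup F] [InnerProductSpace ℝ F]
  [NormedAddCommGroup H] [InnerProductSpace ℝ H]

theorem apply_apply_eq_of_isLeast_energyOn {sU sE sJ : Submodule ℝ H}
    (hUE : ∀ u ∈ sU, ∀ e ∈ sE, ⟪u, e⟫ = 0) (hUJ : ∀ u ∈ sU, ∀ j ∈ sJ, ⟪u, j⟫ = 0)
    (hEJ : ∀ e ∈ sE, ∀ j ∈ sJ, ⟪e, j⟫ = 0)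
    (hspan : ∀ x : H, ∃ u ∈ sU, ∃ e ∈ sE, ∃ j ∈ sJ, x = u + e + j)
    {L : F →ₗᵢ[ℝ] H} (hLU : ∀ y, L y ∈ sU) (hUL : ∀ u ∈ sU, ∃ z, L z = u)
    {A B : H →ₗ[ℝ] H} (hA : A.IsPositive) (hAB : ∀ u, A (B u) = u) (hBA : ∀ u, B (A u) = u)
    {MA MB : F →ₗ[ℝ] F} (hMA : MA.IsSymmetric) (hMB : MB.IsSymmetric)
    (hminA : ∀ y, IsLeast (energyOn A sE (L y)) ⟪MA y, y⟫)
    (hminB : ∀ y, IsLeast (energyOn B sJ (L y)) ⟪MB y, y⟫) (y : F) :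
    MB (MA y) = y := by
  obtain ⟨e, he, horthA⟩ := exists_orthogonal_of_isLeast_energyOn hA.isSymmetric (hminA y)
  obtain ⟨u, hu, e', he', j, hj, hdec⟩ := hspan (A (L y + e))
  have he'_zero : e' = 0 := by
    have := horthA e' he'
    rw [hdec, inner_add_left, inner_add_left, hUE u hu e' he', real_inner_comm e' j,
      hEJ e' he' j hj, zero_add, add_zero] at this
    exact inner_self_eq_zero.mp this
  obtain ⟨z, rfl⟩ := hUL u hu
  have hAx : A (L y + e) = L z + j := by rw [hdec, he'_zero, add_zero]
  have horthB : ∀ j' ∈ sJ, ⟪B (L z + j), j'⟫ = 0 := fun j' hj' => by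
    rw [← hAx, hBA, inner_add_left, hUJ _ (hLU y) j' hj', hEJ e he j' hj', add_zero]
  have hMAy : MA y = z :=
    apply_eq_of_isLeast_energyOn hA hMA hminA he horthA hAx
      fun v => by rw [real_inner_comm, hUJ _ (hLU v) j hj]
  have hMBz : MB z = y :=
    apply_eq_of_isLeast_energyOn (hA.of_rightInverse hAB) hMB hminB hj horthB
      (by rw [← hAx, hBA]) fun v => by rw [real_inner_comm, hUE _ (hLU v) e he]
  rw [hMAy, hMBz]

end Duality

theorem stmt_9_general {d : ℕ} {H : Type*} [NormedAddCommGroup H] [InnerProductSpace ℝ H]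
    (sU sE sJ : Submodule ℝ H)
    (hUE : ∀ u ∈ sU, ∀ e ∈ sE, ⟪u, e⟫ = 0)
    (hUJ : ∀ u ∈ sU, ∀ j ∈ sJ, ⟪u, j⟫ = 0)
    (hEJ : ∀ e ∈ sE, ∀ j ∈ sJ, ⟪e, j⟫ = 0)
    (hspan : ∀ x : H, ∃ u ∈ sU, ∃ e ∈ sE, ∃ j ∈ sJ, x = u + e + j)
    (ι : EuclideanSpace ℝ (Fin d) ≃ₗᵢ[ℝ] sU)
    (A Ainv : H →L[ℝ] H)
    (hsym : ∀ u v : H, ⟪A u, v⟫ = ⟪u, A v⟫)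
    (c : ℝ) (hc : 0 < c)
    (hcoer : ∀ u : H, c * ‖u‖ ^ 2 ≤ ⟪A u, u⟫)
    (hAinv1 : ∀ u : H, A (Ainv u) = u) (hAinv2 : ∀ u : H, Ainv (A u) = u)
    (AH BH : Matrix (Fin d) (Fin d) ℝ) (hAHs : AH.IsSymm) (hBHs : BH.IsSymm)
    (hAH : ∀ E0 : EuclideanSpace ℝ (Fin d),
      IsLeast {r : ℝ | ∃ e ∈ sE, r = ⟪A ((ι E0 : H) + e), (ι E0 : H) + e⟫}
        ⟪Matrix.toEuclideanLin AH E0, E0⟫)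
    (hBH : ∀ J0 : EuclideanSpace ℝ (Fin d),
      IsLeast {r : ℝ | ∃ j ∈ sJ, r = ⟪Ainv ((ι J0 : H) + j), (ι J0 : H) + j⟫}
        ⟪Matrix.toEuclideanLin BH J0, J0⟫) :
    AH = BH⁻¹ := by
  have hA : (A : H →ₗ[ℝ] H).IsPositive :=
    (LinearMap.isPositive_iff _).mpr
      ⟨hsym, fun u => (by positivity : 0 ≤ c * ‖u‖ ^ 2).trans (hcoer u)⟩
  have hsymm {M : Matrix (Fin d) (Fin d) ℝ} (hM : M.IsSymm) : M.toEuclideanLin.IsSymmetric :=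
    Matrix.isSymmetric_toEuclideanLin_iff.mpr (Matrix.isHermitian_iff_isSymm.mpr hM)
  have hBA := apply_apply_eq_of_isLeast_energyOn (L := sU.subtypeₗᵢ.comp ι.toLinearIsometry)
    hUE hUJ hEJ hspan (fun y => (ι y).2) (fun u hu => ⟨ι.symm ⟨u, hu⟩, by simp⟩)
    hA hAinv1 hAinv2 (hsymm hAHs) (hsymm hBHs) hAH hBH
  exact (Matrix.inv_eq_right_inv (Matrix.mul_eq_one_of_toEuclideanLin_apply hBA)).symm

/-- Abstract duality: let `H` be a real Hilbert space with an orthogonal decomposition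
`H = U ⊕ E ⊕ J`, `U` isometrically isomorphic to `ℝ^d`, and `A : H → H` symmetric, bounded
and coercive, with inverse `Ainv`. If the matrices `A_H, B_H ∈ ℝ^{d×d}` are symmetric and
satisfy `⟨A_H E, E⟩ = min_{e ∈ E} ⟨A(E+e), E+e⟩` and `⟨B_H J, J⟩ = min_{j ∈ J} ⟨A⁻¹(J+j), J+j⟩`
(identifying `ℝ^d` with `U`), then `A_H = B_H⁻¹`. -/
theorem stmt_9 {d : ℕ} {H : Type*} [NormedAddCommGroup H] [InnerProductSpace ℝ H]
    [CompleteSpace H]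
    (sU sE sJ : Submodule ℝ H)
    (hUE : ∀ u ∈ sU, ∀ e ∈ sE, ⟪u, e⟫ = 0)
    (hUJ : ∀ u ∈ sU, ∀ j ∈ sJ, ⟪u, j⟫ = 0)
    (hEJ : ∀ e ∈ sE, ∀ j ∈ sJ, ⟪e, j⟫ = 0)
    (hspan : ∀ x : H, ∃ u ∈ sU, ∃ e ∈ sE, ∃ j ∈ sJ, x = u + e + j)
    (ι : EuclideanSpace ℝ (Fin d) ≃ₗᵢ[ℝ] sU)
    (A Ainv : H →L[ℝ] H)
    (hsym : ∀ u v : H, ⟪A u, v⟫ = ⟪u, A v⟫)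
    (c C : ℝ) (hc : 0 < c) (hcC : c ≤ C)
    (hcoer : ∀ u : H, c * ‖u‖ ^ 2 ≤ ⟪A u, u⟫)
    (hbd : ∀ u : H, ⟪A u, u⟫ ≤ C * ‖u‖ ^ 2)
    (hAinv1 : ∀ u : H, A (Ainv u) = u) (hAinv2 : ∀ u : H, Ainv (A u) = u)
    (AH BH : Matrix (Fin d) (Fin d) ℝ) (hAHs : AH.IsSymm) (hBHs : BH.IsSymm)
    (hAH : ∀ E0 : EuclideanSpace ℝ (Fin d),
      IsLeast {r : ℝ | ∃ e ∈ sE, r = ⟪A ((ι E0 : H) + e), (ι E0 : H) + e⟫}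
        ⟪Matrix.toEuclideanLin AH E0, E0⟫)
    (hBH : ∀ J0 : EuclideanSpace ℝ (Fin d),
      IsLeast {r : ℝ | ∃ j ∈ sJ, r = ⟪Ainv ((ι J0 : H) + j), (ι J0 : H) + j⟫}
        ⟪Matrix.toEuclideanLin BH J0, J0⟫) :
    AH = BH⁻¹ :=
  stmt_9_general sU sE sJ hUE hUJ hEJ hspan ι A Ainv hsym c hc hcoer hAinv1 hAinv2 AH BH hAHs hBHs
    hAH hBH
end

section
/- Under the hypotheses of the abstract duality theorem (H = U ⊕ E ⊕ J, A symmetric coercive bounded, A_H and B_H the primal and dual homogenized matrices), the minimizers e^(E) ∈ E and j^(J) ∈ J of the primal and dual problems are connected by J + j^(J) = A[E + e^(E)] whenever J = A_H E, for any E ∈ R^d. -/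
/-!
Minimality of `e` means `A (E + e) ⊥ E`. Sums of such corrected fields are again
`A`-orthogonal to `E`, hence minimizers, so polarizing `⟪A (E + e), E + e⟫ = ⟪A_H E, E⟫` gives
`⟪A (E + e), E'⟫ = ⟪A_H E, E'⟫` for every `E' ∈ U`. Thus `A (E + e) - A_H E` is orthogonal to
`U` and to `E`, i.e. lies in `J`, and `A_H E + (A (E + e) - A_H E)` satisfies the dual optimality
condition, since `A⁻¹` maps it to `E + e ⊥ J`. The dual minimizer is unique because `A⁻¹` is
definite, `A` being coercive.
-/

open scoped RealInnerProductSpace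

theorem eq_zero_of_forall_mul_add_mul_sq_nonneg {a b : ℝ} (h : ∀ t : ℝ, 0 ≤ b * t + a * t ^ 2) :
    b = 0 := by
  have ha : 0 ≤ a := by linarith [h 1, h (-1)]
  have hmin : b * (-b / (a + 1)) + a * (-b / (a + 1)) ^ 2 = -(b ^ 2 / (a + 1) ^ 2) := by
    field_simp
    ring
  by_contra hb
  have hval := h (-b / (a + 1))
  rw [hmin] at hval
  have : 0 < b ^ 2 / (a + 1) ^ 2 := by positivity
  linarith

section

variable {H : Type*} [NormedAddCommGroup H] [InnerProductSpace ℝ H]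

namespace LinearMap.IsSymmetric

variable {T : H →ₗ[ℝ] H}

theorem inner_map_add_add_s10 (hT : T.IsSymmetric) (x y : H) :
    ⟪T (x + y), x + y⟫ = ⟪T x, x⟫ + 2 * ⟪T x, y⟫ + ⟪T y, y⟫ := by
  rw [map_add, inner_add_left, inner_add_right, inner_add_right, hT y x, real_inner_comm (T x) y]
  ring

theorem inner_map_eq_zero_of_forall_le (hT : T.IsSymmetric) {S : Submodule ℝ H} {x : H}
    (hmin : ∀ δ ∈ S, ⟪T x, x⟫ ≤ ⟪T (x + δ), x + δ⟫) : ∀ δ ∈ S, ⟪T x, δ⟫ = 0 := by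
  intro δ hδ
  have hquad (t : ℝ) : 0 ≤ (2 * ⟪T x, δ⟫) * t + ⟪T δ, δ⟫ * t ^ 2 := by
    have := hmin (t • δ) (S.smul_mem t hδ)
    rw [hT.inner_map_add_add_s10, map_smul, inner_smul_left, inner_smul_right, inner_smul_right,
      conj_trivial] at this
    linarith
  linarith [eq_zero_of_forall_mul_add_mul_sq_nonneg hquad]

theorem le_inner_map_add (hT : T.IsSymmetric) {x δ : H} (hδ : 0 ≤ ⟪T δ, δ⟫)
    (horth : ⟪T x, δ⟫ = 0) : ⟪T x, x⟫ ≤ ⟪T (x + δ), x + δ⟫ := by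
  rw [hT.inner_map_add_add_s10, horth]
  linarith

theorem of_rightInverse (hT : T.IsSymmetric) {S : H →ₗ[ℝ] H} (hTS : ∀ u, T (S u) = u) :
    S.IsSymmetric := fun u v => by
  conv_lhs => rw [← hTS v]
  rw [← hT, hTS]

end LinearMap.IsSymmetric

theorem eq_zero_of_inner_rightInverse_self_eq_zero {T S : H →ₗ[ℝ] H} {c : ℝ} (hc : 0 < c)
    (hT : ∀ u, c * ‖u‖ ^ 2 ≤ ⟪T u, u⟫) (hTS : ∀ u, T (S u) = u) {u : H} (hu : ⟪S u, u⟫ = 0) :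
    u = 0 := by
  have hcoer := hT (S u)
  rw [hTS, real_inner_comm, hu] at hcoer
  have : ‖S u‖ ^ 2 = 0 := le_antisymm (nonpos_of_mul_nonpos_right hcoer hc) (sq_nonneg _)
  rw [← hTS u, norm_eq_zero.mp (pow_eq_zero_iff two_ne_zero |>.mp this), map_zero]

variable {V : Type*} [NormedAddCommGroup V] [InnerProductSpace ℝ V]

def IsHomogenizedOperator (A : H →ₗ[ℝ] H) (S : Submodule ℝ H) (L : V →ₗ[ℝ] H)
    (K : V →ₗ[ℝ] V) : Prop :=
  ∀ v, IsLeast {r | ∃ e ∈ S, r = ⟪A (L v + e), L v + e⟫} ⟪K v, v⟫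

namespace IsHomogenizedOperator

variable {A : H →ₗ[ℝ] H} {S : Submodule ℝ H} {L : V →ₗ[ℝ] H} {K : V →ₗ[ℝ] V}

theorem inner_map_self_eq (hK : IsHomogenizedOperator A S L K) (hA : A.IsSymmetric)
    (hApos : ∀ δ ∈ S, 0 ≤ ⟪A δ, δ⟫) {v : V} {e : H} (he : e ∈ S)
    (horth : ∀ δ ∈ S, ⟪A (L v + e), δ⟫ = 0) :
    ⟪A (L v + e), L v + e⟫ = ⟪K v, v⟫ := by
  obtain ⟨⟨e', he', hval⟩, hlow⟩ := hK v
  refine le_antisymm ?_ (hlow ⟨e, he, rfl⟩)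
  have := hA.le_inner_map_add (hApos _ (S.sub_mem he' he)) (horth _ (S.sub_mem he' he))
  rwa [add_assoc, add_sub_cancel, ← hval] at this

theorem inner_map_apply_eq (hK : IsHomogenizedOperator A S L K) (hA : A.IsSymmetric)
    (hApos : ∀ δ ∈ S, 0 ≤ ⟪A δ, δ⟫) (hKsym : K.IsSymmetric) {v : V} {e : H} (he : e ∈ S)
    (horth : ∀ δ ∈ S, ⟪A (L v + e), δ⟫ = 0) (w : V) :
    ⟪A (L v + e), L w⟫ = ⟪K v, w⟫ := by
  obtain ⟨⟨e₁, he₁, hval₁⟩, hlow₁⟩ := hK w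
  have horth₁ : ∀ δ ∈ S, ⟪A (L w + e₁), δ⟫ = 0 := by
    refine hA.inner_map_eq_zero_of_forall_le fun δ hδ => ?_
    rw [← hval₁, add_assoc]
    exact hlow₁ ⟨e₁ + δ, S.add_mem he₁ hδ, rfl⟩
  have hsum : L (v + w) + (e + e₁) = (L v + e) + (L w + e₁) := by
    rw [map_add]; abel
  have hsum_val := hK.inner_map_self_eq hA hApos (S.add_mem he he₁) fun δ hδ => by
    rw [hsum, map_add, inner_add_left, horth δ hδ, horth₁ δ hδ, add_zero]
  rw [hsum, hA.inner_map_add_add_s10, hKsym.inner_map_add_add_s10,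
    hK.inner_map_self_eq hA hApos he horth, ← hval₁, inner_add_right, horth e₁ he₁] at hsum_val
  linarith

end IsHomogenizedOperator

theorem mem_of_forall_inner_eq_zero {U E J : Submodule ℝ H}
    (hUJ : ∀ u ∈ U, ∀ j ∈ J, ⟪u, j⟫ = 0) (hEJ : ∀ e ∈ E, ∀ j ∈ J, ⟪e, j⟫ = 0)
    (hspan : ∀ x : H, ∃ u ∈ U, ∃ e ∈ E, ∃ j ∈ J, x = u + e + j) {z : H}
    (hzU : ∀ u ∈ U, ⟪z, u⟫ = 0) (hzE : ∀ e ∈ E, ⟪z, e⟫ = 0) : z ∈ J := by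
  obtain ⟨u, hu, e, he, j, hj, rfl⟩ := hspan z
  have hue : ⟪u + e, u + e⟫ = 0 := by
    have hz : ⟪u + e + j, u + e⟫ = 0 := by
      rw [inner_add_right, hzU u hu, hzE e he, add_zero]
    rwa [inner_add_left (u + e), inner_add_right j, real_inner_comm u, real_inner_comm e,
      hUJ u hu j hj, hEJ e he j hj, add_zero, add_zero] at hz
  rw [inner_self_eq_zero.mp hue, zero_add]
  exact hj

theorem LinearMap.eq_of_forall_inner_map_add_eq_zero {T : H →ₗ[ℝ] H} {S : Submodule ℝ H}
    (hT : ∀ δ ∈ S, ⟪T δ, δ⟫ = 0 → δ = 0) {y a b : H} (ha : a ∈ S) (hb : b ∈ S)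
    (hTa : ∀ δ ∈ S, ⟪T (y + a), δ⟫ = 0) (hTb : ∀ δ ∈ S, ⟪T (y + b), δ⟫ = 0) : a = b := by
  have hab : ⟪T (a - b), a - b⟫ = 0 := by
    have : T (a - b) = T (y + a) - T (y + b) := by rw [← map_sub, add_sub_add_left_eq_sub]
    rw [this, inner_sub_left, hTa _ (S.sub_mem ha hb), hTb _ (S.sub_mem ha hb), sub_zero]
  exact sub_eq_zero.mp (hT _ (S.sub_mem ha hb) hab)

end

theorem stmt_10_general {d : ℕ} {H : Type*} [NormedAddCommGroup H] [InnerProductSpace ℝ H]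
    (sU sE sJ : Submodule ℝ H)
    (hUE : ∀ u ∈ sU, ∀ e ∈ sE, ⟪u, e⟫ = 0)
    (hUJ : ∀ u ∈ sU, ∀ j ∈ sJ, ⟪u, j⟫ = 0)
    (hEJ : ∀ e ∈ sE, ∀ j ∈ sJ, ⟪e, j⟫ = 0)
    (hspan : ∀ x : H, ∃ u ∈ sU, ∃ e ∈ sE, ∃ j ∈ sJ, x = u + e + j)
    (ι : EuclideanSpace ℝ (Fin d) ≃ₗᵢ[ℝ] sU)
    (A Ainv : H →L[ℝ] H)
    (hsym : ∀ u v : H, ⟪A u, v⟫ = ⟪u, A v⟫)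
    (c : ℝ) (hc : 0 < c)
    (hcoer : ∀ u : H, c * ‖u‖ ^ 2 ≤ ⟪A u, u⟫)
    (hAinv1 : ∀ u : H, A (Ainv u) = u) (hAinv2 : ∀ u : H, Ainv (A u) = u)
    (AH : Matrix (Fin d) (Fin d) ℝ) (hAHs : AH.IsSymm)
    (hAH : ∀ E1 : EuclideanSpace ℝ (Fin d),
      IsLeast {r : ℝ | ∃ e ∈ sE, r = ⟪A ((ι E1 : H) + e), (ι E1 : H) + e⟫}
        ⟪Matrix.toEuclideanLin AH E1, E1⟫)
    (E0 : EuclideanSpace ℝ (Fin d))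
    (J0 : EuclideanSpace ℝ (Fin d)) (hJ0 : J0 = Matrix.toEuclideanLin AH E0)
    (e : H) (he : e ∈ sE)
    (hemin : ∀ e' ∈ sE,
      ⟪A ((ι E0 : H) + e), (ι E0 : H) + e⟫ ≤ ⟪A ((ι E0 : H) + e'), (ι E0 : H) + e'⟫)
    (j : H) (hj : j ∈ sJ)
    (hjmin : ∀ j' ∈ sJ,
      ⟪Ainv ((ι J0 : H) + j), (ι J0 : H) + j⟫ ≤ ⟪Ainv ((ι J0 : H) + j'), (ι J0 : H) + j'⟫) :
    (ι J0 : H) + j = A ((ι E0 : H) + e) := by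
  have hA : (A : H →ₗ[ℝ] H).IsSymmetric := hsym
  have hApos (u : H) : 0 ≤ ⟪A u, u⟫ := (mul_nonneg hc.le (sq_nonneg _)).trans (hcoer u)
  have hK : IsHomogenizedOperator (A : H →ₗ[ℝ] H) sE (sU.subtype ∘ₗ ι.toLinearMap)
      (Matrix.toEuclideanLin AH) := hAH
  have hKsym : (Matrix.toEuclideanLin AH).IsSymmetric :=
    Matrix.isSymmetric_toEuclideanLin_iff.mpr (Matrix.isHermitian_iff_isSymm.mpr hAHs)
  set x₀ : H := (ι E0 : H) + e
  have hx₀E : ∀ δ ∈ sE, ⟪A x₀, δ⟫ = 0 := hA.inner_map_eq_zero_of_forall_le fun δ hδ => by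
    rw [add_assoc]; exact hemin (e + δ) (sE.add_mem he hδ)
  have hflux : A x₀ - ι J0 ∈ sJ := by
    refine mem_of_forall_inner_eq_zero hUJ hEJ hspan (fun u hu => ?_) fun δ hδ => ?_
    · obtain ⟨w, rfl⟩ : ∃ w, (ι w : H) = u := ⟨ι.symm ⟨u, hu⟩, by simp⟩
      rw [inner_sub_left, hJ0, ← Submodule.coe_inner, ι.inner_map_map]
      exact sub_eq_zero.mpr (hK.inner_map_apply_eq hA (fun δ _ => hApos δ) hKsym he hx₀E w)
    · rw [inner_sub_left, hx₀E δ hδ, hUE _ (ι J0).2 δ hδ, sub_self]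
  have hdual_flux : ∀ δ ∈ sJ, ⟪Ainv (ι J0 + (A x₀ - ι J0)), δ⟫ = 0 := fun δ hδ => by
    rw [add_sub_cancel, hAinv2, inner_add_left, hUJ _ (ι E0).2 δ hδ, hEJ e he δ hδ, add_zero]
  have hdual_j : ∀ δ ∈ sJ, ⟪Ainv (ι J0 + j), δ⟫ = 0 :=
    (hA.of_rightInverse hAinv1).inner_map_eq_zero_of_forall_le fun δ hδ => by
      rw [add_assoc]; exact hjmin (j + δ) (sJ.add_mem hj hδ)
  have hAinv_def : ∀ δ ∈ sJ, ⟪Ainv δ, δ⟫ = 0 → δ = 0 := fun _ _ =>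
    eq_zero_of_inner_rightInverse_self_eq_zero (T := A) hc hcoer hAinv1
  rw [LinearMap.eq_of_forall_inner_map_add_eq_zero hAinv_def hj hflux hdual_j hdual_flux,
    add_sub_cancel]

/-- In the abstract duality setting (`H = U ⊕ E ⊕ J`, `A` symmetric coercive bounded with
inverse `Ainv`, `A_H` the primal homogenized matrix), the primal minimizer `e ∈ E` of
`⟨A(E₀+e), E₀+e⟩` and the dual minimizer `j ∈ J` of `⟨A⁻¹(J₀+j), J₀+j⟩` are connected by
`J₀ + j = A(E₀ + e)` whenever `J₀ = A_H E₀`, for any `E₀ ∈ ℝ^d` (identified with `U`). -/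
theorem stmt_10 {d : ℕ} {H : Type*} [NormedAddCommGroup H] [InnerProductSpace ℝ H]
    [CompleteSpace H]
    (sU sE sJ : Submodule ℝ H)
    (hUE : ∀ u ∈ sU, ∀ e ∈ sE, ⟪u, e⟫ = 0)
    (hUJ : ∀ u ∈ sU, ∀ j ∈ sJ, ⟪u, j⟫ = 0)
    (hEJ : ∀ e ∈ sE, ∀ j ∈ sJ, ⟪e, j⟫ = 0)
    (hspan : ∀ x : H, ∃ u ∈ sU, ∃ e ∈ sE, ∃ j ∈ sJ, x = u + e + j)
    (ι : EuclideanSpace ℝ (Fin d) ≃ₗᵢ[ℝ] sU)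
    (A Ainv : H →L[ℝ] H)
    (hsym : ∀ u v : H, ⟪A u, v⟫ = ⟪u, A v⟫)
    (c C : ℝ) (hc : 0 < c) (hcC : c ≤ C)
    (hcoer : ∀ u : H, c * ‖u‖ ^ 2 ≤ ⟪A u, u⟫)
    (hbd : ∀ u : H, ⟪A u, u⟫ ≤ C * ‖u‖ ^ 2)
    (hAinv1 : ∀ u : H, A (Ainv u) = u) (hAinv2 : ∀ u : H, Ainv (A u) = u)
    (AH : Matrix (Fin d) (Fin d) ℝ) (hAHs : AH.IsSymm)
    (hAH : ∀ E1 : EuclideanSpace ℝ (Fin d),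
      IsLeast {r : ℝ | ∃ e ∈ sE, r = ⟪A ((ι E1 : H) + e), (ι E1 : H) + e⟫}
        ⟪Matrix.toEuclideanLin AH E1, E1⟫)
    (E0 : EuclideanSpace ℝ (Fin d))
    (J0 : EuclideanSpace ℝ (Fin d)) (hJ0 : J0 = Matrix.toEuclideanLin AH E0)
    (e : H) (he : e ∈ sE)
    (hemin : ∀ e' ∈ sE,
      ⟪A ((ι E0 : H) + e), (ι E0 : H) + e⟫ ≤ ⟪A ((ι E0 : H) + e'), (ι E0 : H) + e'⟫)
    (j : H) (hj : j ∈ sJ)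
    (hjmin : ∀ j' ∈ sJ,
      ⟪Ainv ((ι J0 : H) + j), (ι J0 : H) + j⟫ ≤ ⟪Ainv ((ι J0 : H) + j'), (ι J0 : H) + j'⟫) :
    (ι J0 : H) + j = A ((ι E0 : H) + e) :=
  stmt_10_general sU sE sJ hUE hUJ hEJ hspan ι A Ainv hsym c hc hcoer hAinv1 hAinv2 AH hAHs hAH E0
    J0 hJ0 e he hemin j hj hjmin
end

section
/- Let A_H be the homogenized matrix and let ē_h^(α) ∈ E and j̄_h^(α) ∈ J be arbitrary conforming approximations of the auxiliary minimizers. Define the symmetric matrices Ā_{H,h} with entries a(e_β + ē_h^(β), e_α + ē_h^(α)) and B̄_{H,h} with entries a⁻¹(e_β + j̄_h^(β), e_α + j̄_h^(α)), where a(u,v) = ⟨Au,v⟩_{L²} and a⁻¹(u,v) = ⟨A⁻¹u,v⟩_{L²}, and e_α is the α-th unit vector. Then B̄_{H,h}⁻¹ ⪯ A_H ⪯ Ā_{H,h} in the Löwner order. -/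
/-! Testing the minimisation problem that defines `A_H` with the admissible field
`∑ β, u β • ē_h^(β)` gives `A_H ⪯ Ā` at once: the energy of `u + ∑ β, u β • ē_h^(β)` is exactly
`Ā u ⬝ᵥ u`, by bilinearity. The same argument in the dual problem gives `B_H ⪯ B̄`, and inversion
reverses the Löwner order thanks to the variational formula
`P⁻¹ u ⬝ᵥ u = max_v (2 u ⬝ᵥ v - P v ⬝ᵥ v)`, so `B̄⁻¹ ⪯ B_H⁻¹ = A_H`. -/

open Matrix MeasureTheory

namespace Matrix.PosDef

variable {n : Type*} [Fintype n] [DecidableEq n] {P : Matrix n n ℝ}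

theorem two_dotProduct_sub_quadForm_le_quadForm_inv (hP : P.PosDef) (u v : n → ℝ) :
    2 * (u ⬝ᵥ v) - P *ᵥ v ⬝ᵥ v ≤ P⁻¹ *ᵥ u ⬝ᵥ u := by
  set a := P⁻¹ *ᵥ u
  have hPa : P *ᵥ a = u := by
    rw [mulVec_mulVec, mul_nonsing_inv P (isUnit_iff_ne_zero.mpr hP.det_pos.ne'), one_mulVec]
  have hsymm : P *ᵥ v ⬝ᵥ a = u ⬝ᵥ v := by
    rw [dotProduct_comm, dotProduct_mulVec, ← mulVec_transpose,
      ← conjTranspose_eq_transpose_of_trivial, hP.isHermitian.eq, hPa]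
  have hnonneg : 0 ≤ P *ᵥ (a - v) ⬝ᵥ (a - v) := by
    simpa [dotProduct_comm] using hP.posSemidef.dotProduct_mulVec_nonneg (a - v)
  have hexpand : P *ᵥ (a - v) ⬝ᵥ (a - v) = a ⬝ᵥ u - 2 * (u ⬝ᵥ v) + P *ᵥ v ⬝ᵥ v := by
    simp only [mulVec_sub, sub_dotProduct, dotProduct_sub, hPa, hsymm]
    rw [dotProduct_comm u a, dotProduct_comm u v]
    ring
  linarith

theorem quadForm_inv_le_of_quadForm_le (hP : P.PosDef) {N : Matrix n n ℝ} (hN : IsUnit N.det)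
    (h : ∀ u, P *ᵥ u ⬝ᵥ u ≤ N *ᵥ u ⬝ᵥ u) (u : n → ℝ) : N⁻¹ *ᵥ u ⬝ᵥ u ≤ P⁻¹ *ᵥ u ⬝ᵥ u := by
  set v := N⁻¹ *ᵥ u
  have hNv : N *ᵥ v = u := by rw [mulVec_mulVec, mul_nonsing_inv N hN, one_mulVec]
  calc N⁻¹ *ᵥ u ⬝ᵥ u = 2 * (u ⬝ᵥ v) - N *ᵥ v ⬝ᵥ v := by
        rw [hNv, dotProduct_comm u v]; ring
    _ ≤ 2 * (u ⬝ᵥ v) - P *ᵥ v ⬝ᵥ v := by linarith [h v]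
    _ ≤ P⁻¹ *ᵥ u ⬝ᵥ u := hP.two_dotProduct_sub_quadForm_le_quadForm_inv u v

end Matrix.PosDef

section Energy

variable {X : Type*} [MeasurableSpace X] {μ : Measure X} {m n : Type*} [Fintype m] [Fintype n]

theorem integral_quadForm_sum_smul (M : X → Matrix m m ℝ) (g : n → X → m → ℝ)
    (hg : ∀ α β, Integrable (fun x => M x *ᵥ g β x ⬝ᵥ g α x) μ) (u : n → ℝ) :
    ∫ x, M x *ᵥ (∑ β, u β • g β x) ⬝ᵥ (∑ α, u α • g α x) ∂μ
      = of (fun α β => ∫ x, M x *ᵥ g β x ⬝ᵥ g α x ∂μ) *ᵥ u ⬝ᵥ u := by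
  have hpoint : ∀ x, M x *ᵥ (∑ β, u β • g β x) ⬝ᵥ (∑ α, u α • g α x)
      = ∑ α, ∑ β, u α * (u β * (M x *ᵥ g β x ⬝ᵥ g α x)) := fun x => by
    simp only [mulVec_sum, mulVec_smul, dotProduct_sum, sum_dotProduct, dotProduct_smul,
      smul_dotProduct, smul_eq_mul, Finset.mul_sum]
  have hint : ∀ α β, Integrable (fun x => u α * (u β * (M x *ᵥ g β x ⬝ᵥ g α x))) μ :=
    fun α β => ((hg α β).const_mul _).const_mul _
  calc ∫ x, M x *ᵥ (∑ β, u β • g β x) ⬝ᵥ (∑ α, u α • g α x) ∂μ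
      = ∑ α, ∑ β, u α * (u β * ∫ x, M x *ᵥ g β x ⬝ᵥ g α x ∂μ) := by
        simp only [hpoint]
        rw [integral_finsetSum _ fun α _ => integrable_finsetSum _ fun β _ => hint α β]
        refine Finset.sum_congr rfl fun α _ => ?_
        rw [integral_finsetSum _ fun β _ => hint α β]
        simp only [integral_const_mul]
    _ = _ := by
        simp only [mulVec, dotProduct, of_apply, Finset.sum_mul]
        refine Finset.sum_congr rfl fun α _ => Finset.sum_congr rfl fun β _ => by ring

end Energy

section Variational

variable {X : Type*} [MeasurableSpace X] {μ : Measure X} {n : Type*} [Fintype n] [DecidableEq n]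

theorem add_sum_smul_eq_sum_smul_single_add (u : n → ℝ) (f : n → n → ℝ) :
    u + ∑ β, u β • f β = ∑ β, u β • (Pi.single β 1 + f β) := by
  simp only [smul_add, Finset.sum_add_distrib, ← Pi.single_smul', smul_eq_mul, mul_one,
    LinearMap.sum_single_apply]

theorem quadForm_le_of_isLeast_integral_quadForm (κ : ℝ) (M : X → Matrix n n ℝ)
    (S : Submodule ℝ (X → n → ℝ)) {H Hbar : Matrix n n ℝ}
    (hH : ∀ E, IsLeast {r | ∃ e ∈ S, r = κ * ∫ x, M x *ᵥ (E + e x) ⬝ᵥ (E + e x) ∂μ}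
      (H *ᵥ E ⬝ᵥ E))
    (f : n → X → n → ℝ) (hf : ∀ α, f α ∈ S)
    (hint : ∀ α β, Integrable
      (fun x => M x *ᵥ (Pi.single β 1 + f β x) ⬝ᵥ (Pi.single α 1 + f α x)) μ)
    (hHbar : ∀ α β, Hbar α β =
      κ * ∫ x, M x *ᵥ (Pi.single β 1 + f β x) ⬝ᵥ (Pi.single α 1 + f α x) ∂μ)
    (u : n → ℝ) : H *ᵥ u ⬝ᵥ u ≤ Hbar *ᵥ u ⬝ᵥ u := by
  have hmem : ∑ β, u β • f β ∈ S := S.sum_mem fun β _ => S.smul_mem _ (hf β)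
  refine (hH u).2 ⟨_, hmem, ?_⟩
  have hHbar' : Hbar = κ • of fun α β =>
      ∫ x, M x *ᵥ (Pi.single β 1 + f β x) ⬝ᵥ (Pi.single α 1 + f α x) ∂μ := by
    ext α β; simp [hHbar]
  simp only [Finset.sum_apply, Pi.smul_apply, add_sum_smul_eq_sum_smul_single_add,
    integral_quadForm_sum_smul _ _ hint, hHbar', smul_mulVec, smul_dotProduct, smul_eq_mul]

end Variational

theorem stmt_13_general {d : ℕ} (Y : Fin d → ℝ)
    (cell : Set (Fin d → ℝ))
    (A : (Fin d → ℝ) → Matrix (Fin d) (Fin d) ℝ)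
    -- conforming subspaces: zero-mean curl-free fields S_E and divergence-free fields S_J
    (SE SJ : Submodule ℝ ((Fin d → ℝ) → Fin d → ℝ))
    (hIntE : ∀ e ∈ SE, ∀ e' ∈ SE, ∀ E E' : Fin d → ℝ,
      IntegrableOn (fun x => (A x).mulVec (E + e x) ⬝ᵥ (E' + e' x)) cell volume)
    (hIntJ : ∀ j ∈ SJ, ∀ j' ∈ SJ, ∀ J J' : Fin d → ℝ,
      IntegrableOn (fun x => (A x)⁻¹.mulVec (J + j x) ⬝ᵥ (J' + j' x)) cell volume)
    -- homogenized matrices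
    (AH BH : Matrix (Fin d) (Fin d) ℝ)
    (hBHpd : BH.PosDef) (hdual : AH = BH⁻¹)
    (hAH : ∀ E : Fin d → ℝ, IsLeast
      {r : ℝ | ∃ e ∈ SE, r = (∏ α, Y α)⁻¹ * ∫ x in cell, (A x).mulVec (E + e x) ⬝ᵥ (E + e x)}
      (AH.mulVec E ⬝ᵥ E))
    (hBH : ∀ J : Fin d → ℝ, IsLeast
      {r : ℝ | ∃ j ∈ SJ, r = (∏ α, Y α)⁻¹ * ∫ x in cell, (A x)⁻¹.mulVec (J + j x) ⬝ᵥ (J + j x)}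
      (BH.mulVec J ⬝ᵥ J))
    -- conforming approximate minimizers
    (eh jh : Fin d → ((Fin d → ℝ) → Fin d → ℝ))
    (heh : ∀ α, eh α ∈ SE) (hjh : ∀ α, jh α ∈ SJ)
    -- the upper-lower bound matrices
    (Abar Bbar : Matrix (Fin d) (Fin d) ℝ)
    (hAbar : ∀ α β, Abar α β = (∏ γ, Y γ)⁻¹ *
      ∫ x in cell, (A x).mulVec (Pi.single β 1 + eh β x) ⬝ᵥ (Pi.single α 1 + eh α x))
    (hBbar : ∀ α β, Bbar α β = (∏ γ, Y γ)⁻¹ *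
      ∫ x in cell, (A x)⁻¹.mulVec (Pi.single β 1 + jh β x) ⬝ᵥ (Pi.single α 1 + jh α x))
    (hBbarpd : Bbar.PosDef) :
    (∀ u : Fin d → ℝ, Bbar⁻¹.mulVec u ⬝ᵥ u ≤ AH.mulVec u ⬝ᵥ u) ∧
    (∀ u : Fin d → ℝ, AH.mulVec u ⬝ᵥ u ≤ Abar.mulVec u ⬝ᵥ u) := by
  have hBH_le : ∀ u, BH *ᵥ u ⬝ᵥ u ≤ Bbar *ᵥ u ⬝ᵥ u :=
    quadForm_le_of_isLeast_integral_quadForm _ _ SJ hBH jh hjh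
      (fun α β => hIntJ _ (hjh β) _ (hjh α) _ _) hBbar
  refine ⟨fun u => ?_, quadForm_le_of_isLeast_integral_quadForm _ _ SE hAH eh heh
    (fun α β => hIntE _ (heh β) _ (heh α) _ _) hAbar⟩
  rw [hdual]
  exact hBHpd.quadForm_inv_le_of_quadForm_le (isUnit_iff_ne_zero.mpr hBbarpd.det_pos.ne')
    hBH_le u

/-- Guaranteed upper-lower bounds: with `A_H = B_H⁻¹` the primal/dual homogenized matrices
(defined by minimization of `a(E+e, E+e)` over the curl-free space `S_E` and of
`a⁻¹(J+j, J+j)` over the divergence-free space `S_J`) and with arbitrary conforming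
approximations `e_h^(α) ∈ S_E`, `j_h^(α) ∈ S_J`, the matrices
`Ā_{αβ} = a(e_β + e_h^(β), e_α + e_h^(α))` and `B̄_{αβ} = a⁻¹(e_β + j_h^(β), e_α + j_h^(α))`
(which are SPD) satisfy `B̄⁻¹ ⪯ A_H ⪯ Ā` in the Löwner order. -/
theorem stmt_13 {d : ℕ} (Y : Fin d → ℝ) (hY : ∀ α, 0 < Y α)
    (cell : Set (Fin d → ℝ))
    (hcell : cell = Set.univ.pi fun α => Set.Ioo (-(Y α) / 2) (Y α / 2))
    (A : (Fin d → ℝ) → Matrix (Fin d) (Fin d) ℝ)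
    (hAmeas : ∀ i j, Measurable fun x => A x i j)
    (hAsym : ∀ x, (A x).IsSymm)
    (c C : ℝ) (hc : 0 < c) (hcC : c ≤ C)
    (hell : ∀ (x : Fin d → ℝ) (v : Fin d → ℝ),
      c * (v ⬝ᵥ v) ≤ (A x).mulVec v ⬝ᵥ v ∧ (A x).mulVec v ⬝ᵥ v ≤ C * (v ⬝ᵥ v))
    -- conforming subspaces: zero-mean curl-free fields S_E and divergence-free fields S_J
    (SE SJ : Submodule ℝ ((Fin d → ℝ) → Fin d → ℝ))
    (hSEmean : ∀ e ∈ SE, (∀ α, IntegrableOn (fun x => e x α) cell volume) ∧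
      (∫ x in cell, e x) = 0)
    (hSJmean : ∀ j ∈ SJ, (∀ α, IntegrableOn (fun x => j x α) cell volume) ∧
      (∫ x in cell, j x) = 0)
    (hIntE : ∀ e ∈ SE, ∀ e' ∈ SE, ∀ E E' : Fin d → ℝ,
      IntegrableOn (fun x => (A x).mulVec (E + e x) ⬝ᵥ (E' + e' x)) cell volume)
    (hIntJ : ∀ j ∈ SJ, ∀ j' ∈ SJ, ∀ J J' : Fin d → ℝ,
      IntegrableOn (fun x => (A x)⁻¹.mulVec (J + j x) ⬝ᵥ (J' + j' x)) cell volume)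
    -- homogenized matrices
    (AH BH : Matrix (Fin d) (Fin d) ℝ)
    (hAHpd : AH.PosDef) (hBHpd : BH.PosDef) (hdual : AH = BH⁻¹)
    (hAH : ∀ E : Fin d → ℝ, IsLeast
      {r : ℝ | ∃ e ∈ SE, r = (∏ α, Y α)⁻¹ * ∫ x in cell, (A x).mulVec (E + e x) ⬝ᵥ (E + e x)}
      (AH.mulVec E ⬝ᵥ E))
    (hBH : ∀ J : Fin d → ℝ, IsLeast
      {r : ℝ | ∃ j ∈ SJ, r = (∏ α, Y α)⁻¹ * ∫ x in cell, (A x)⁻¹.mulVec (J + j x) ⬝ᵥ (J + j x)}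
      (BH.mulVec J ⬝ᵥ J))
    -- conforming approximate minimizers
    (eh jh : Fin d → ((Fin d → ℝ) → Fin d → ℝ))
    (heh : ∀ α, eh α ∈ SE) (hjh : ∀ α, jh α ∈ SJ)
    -- the upper-lower bound matrices
    (Abar Bbar : Matrix (Fin d) (Fin d) ℝ)
    (hAbar : ∀ α β, Abar α β = (∏ γ, Y γ)⁻¹ *
      ∫ x in cell, (A x).mulVec (Pi.single β 1 + eh β x) ⬝ᵥ (Pi.single α 1 + eh α x))
    (hBbar : ∀ α β, Bbar α β = (∏ γ, Y γ)⁻¹ *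
      ∫ x in cell, (A x)⁻¹.mulVec (Pi.single β 1 + jh β x) ⬝ᵥ (Pi.single α 1 + jh α x))
    (hAbarpd : Abar.PosDef) (hBbarpd : Bbar.PosDef) :
    (∀ u : Fin d → ℝ, Bbar⁻¹.mulVec u ⬝ᵥ u ≤ AH.mulVec u ⬝ᵥ u) ∧
    (∀ u : Fin d → ℝ, AH.mulVec u ⬝ᵥ u ≤ Abar.mulVec u ⬝ᵥ u) :=
  stmt_13_general Y cell A SE SJ hIntE hIntJ AH BH hBHpd hdual hAH hBH eh jh heh hjh Abar Bbar hAbar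
    hBbar hBbarpd
end

section
/- For u_N, v_N trigonometric polynomials of degree N (odd grid) and A ∈ L^∞_per(Y; R^{d×d}), the exact integral ⟨A u_N, v_N⟩_{L²_#} equals the discrete double-grid quadrature ⟨A_{2N−1} u_N, v_N⟩ on the grid with 2N−1 points, where u_N, v_N are evaluated at the finer grid points x_{2N−1}^k and A_{2N−1}^{km} = δ_{km} Σ_{n∈Z^d_{2N−1}} ω_{2N−1}^{kn} Â(n) is block diagonal, built from the Fourier coefficients Â(n) of A. -/
/-!
Expand both sides in the Fourier coefficients `û_k`, `v̂_m` (`k, m ∈ Z^d_N`). Since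
`e_k \bar e_m = \bar e_{m-k}`, the exact integral is `Σ_{k,m} û_k \bar v̂_m Â(m - k)`.
On the grid, `A_{2N-1}`, `u_N` and `v_N` are sums of the discrete modes `ω^{K n}`, `ω^{K k}`,
`ω^{-K m}`, and summing over the grid kills every frequency `n + k - m` except multiples of
`2N - 1`. For `n ∈ Z^d_{2N-1}` and `k, m ∈ Z^d_N` one has `|n + k - m| < 2N - 1` componentwise,
so only `n = m - k` survives and there is no aliasing: the quadrature gives the same sum.
-/

open Complex Finset MeasureTheory

theorem sum_Ico_zpow_of_pow_eq_one {K : Type*} [Field K] [DecidableEq K] {ζ : K} {M : ℕ}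
    (hM : M ≠ 0) (hζ : ζ ^ M = 1) (a : ℤ) :
    ∑ k ∈ Ico a (a + M), ζ ^ k = if ζ = 1 then (M : K) else 0 := by
  have hζ0 : ζ ≠ 0 := by rintro rfl; simp [hM] at hζ
  rw [Int.Ico_eq_finset_map, sum_map]
  simp only [add_sub_cancel_left, Int.toNat_natCast, Function.Embedding.trans_apply,
    Nat.castEmbedding_apply, addLeftEmbedding_apply, zpow_add₀ hζ0, zpow_natCast, ← mul_sum]
  split_ifs with h1
  · simp [h1]
  · rw [geom_sum_eq h1, hζ, sub_self, zero_div, mul_zero]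

theorem sum_Ico_exp_two_pi_I_mul_div {M : ℕ} (hM : M ≠ 0) (a r : ℤ) :
    ∑ k ∈ Ico a (a + M), exp (2 * Real.pi * I * ((r : ℂ) * ((k : ℝ) : ℂ) / ((M : ℝ) : ℂ))) =
      if (M : ℤ) ∣ r then (M : ℂ) else 0 := by
  have hprim := isPrimitiveRoot_exp M hM
  have hterm : ∀ k : ℤ, exp (2 * Real.pi * I * ((r : ℂ) * ((k : ℝ) : ℂ) / ((M : ℝ) : ℂ))) =
      (exp (2 * Real.pi * I / M) ^ r) ^ k := by
    intro k
    rw [← zpow_mul, ← exp_int_mul]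
    congr 1
    push_cast
    ring
  simp only [hterm]
  rw [sum_Ico_zpow_of_pow_eq_one hM]
  · exact if_congr (hprim.zpow_eq_one_iff_dvd r) rfl rfl
  rw [← zpow_natCast, ← zpow_mul, mul_comm r, zpow_mul, hprim.zpow_eq_one, one_zpow]

section FourierModes

variable {d : ℕ}

/-- `exp(2πi ⟨ξ(n), x⟩)` with `ξ(n)_β = n_β / L_β`. -/
noncomputable def fourierMode (L : Fin d → ℝ) (n : Fin d → ℤ) (x : Fin d → ℝ) : ℂ :=
  exp (2 * Real.pi * I * ∑ β, (n β : ℂ) * (x β : ℂ) / (L β : ℂ))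

variable (L : Fin d → ℝ) (x : Fin d → ℝ)

theorem fourierMode_add (n n' : Fin d → ℤ) :
    fourierMode L (n + n') x = fourierMode L n x * fourierMode L n' x := by
  simp only [fourierMode, ← exp_add, Pi.add_apply, Int.cast_add, add_mul, add_div,
    sum_add_distrib, mul_add]

theorem fourierMode_sub (n n' : Fin d → ℤ) :
    fourierMode L (n - n') x = fourierMode L n x / fourierMode L n' x := by
  simp only [fourierMode, ← exp_sub, Pi.sub_apply, Int.cast_sub, sub_mul, sub_div,
    sum_sub_distrib, mul_sub]

theorem conj_fourierMode (n : Fin d → ℤ) :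
    starRingEnd ℂ (fourierMode L n x) = (fourierMode L n x)⁻¹ := by
  rw [fourierMode, ← exp_conj, ← exp_neg]
  congr 1
  simp [map_sum, map_ofNat]

theorem norm_fourierMode (n : Fin d → ℤ) : ‖fourierMode L n x‖ = 1 := by
  rw [fourierMode, norm_exp]
  simp

theorem continuous_fourierMode (n : Fin d → ℤ) : Continuous (fourierMode L n) := by
  unfold fourierMode
  fun_prop

theorem fourierMode_mul_mul (c : Fin d → ℝ) (hc : ∀ α, c α ≠ 0) (n : Fin d → ℤ) :
    fourierMode (fun α => c α * L α) n (fun α => c α * x α) = fourierMode L n x := by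
  simp only [fourierMode]
  congr 2
  refine sum_congr rfl fun α _ => ?_
  have : (c α : ℂ) ≠ 0 := ofReal_ne_zero.2 (hc α)
  push_cast
  field_simp

theorem fourierMode_natCast_intCast (M : Fin d → ℕ) (n K : Fin d → ℤ) :
    fourierMode (fun α => (M α : ℝ)) n (fun α => (K α : ℝ)) =
      exp (2 * Real.pi * I * ∑ α, (K α : ℂ) * (n α : ℂ) / ((M α : ℝ) : ℂ)) := by
  simp only [fourierMode, ofReal_intCast, mul_comm]

theorem fourierMode_of_grid (M : Fin d → ℕ) (hM : ∀ α, M α ≠ 0) (hL : ∀ α, L α ≠ 0)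
    (K n : Fin d → ℤ) (hx : ∀ α, x α = L α * K α / M α) :
    fourierMode L n x = fourierMode (fun α => (M α : ℝ)) n (fun α => (K α : ℝ)) := by
  have hc : ∀ α, L α / M α ≠ 0 := fun α => div_ne_zero (hL α) (Nat.cast_ne_zero.2 (hM α))
  rw [← fourierMode_mul_mul (fun α => (M α : ℝ)) _ _ hc]
  congr 1
  · exact funext fun α => (div_mul_cancel₀ _ (Nat.cast_ne_zero.2 (hM α))).symm
  · exact funext fun α => by rw [hx]; ring

theorem MeasureTheory.Integrable.mul_inv_fourierMode {μ : Measure (Fin d → ℝ)}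
    {f : (Fin d → ℝ) → ℂ} (hf : Integrable f μ) (n : Fin d → ℤ) :
    Integrable (fun x => f x * (fourierMode L n x)⁻¹) μ :=
  hf.mul_bdd ((continuous_fourierMode L n).inv₀ fun x => exp_ne_zero _).aestronglyMeasurable
    (ae_of_all _ fun x => by rw [norm_inv, norm_fourierMode, inv_one])

theorem sum_piFinset_fourierMode (M : Fin d → ℕ) (hM : ∀ α, M α ≠ 0) (a r : Fin d → ℤ) :
    ∑ K ∈ Fintype.piFinset (fun α => Ico (a α) (a α + M α)),
        fourierMode (fun α => (M α : ℝ)) r (fun α => (K α : ℝ)) =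
      if ∀ α, (M α : ℤ) ∣ r α then ∏ α, (M α : ℂ) else 0 := by
  simp only [fourierMode, mul_sum, exp_sum]
  rw [← prod_univ_sum (fun α => Ico (a α) (a α + M α)) fun α k =>
    exp (2 * Real.pi * I * ((r α : ℂ) * ((k : ℝ) : ℂ) / ((M α : ℝ) : ℂ)))]
  simp only [sum_Ico_exp_two_pi_I_mul_div (hM _)]
  split_ifs with h
  · exact prod_congr rfl fun α _ => if_pos (h α)
  · obtain ⟨α, hα⟩ := not_forall.mp h
    exact prod_eq_zero (mem_univ α) (if_neg hα)

theorem sum_piFinset_fourierSeries_mul_mul_conj (M : Fin d → ℕ) (hM : ∀ α, M α ≠ 0)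
    (a : Fin d → ℤ) {S T : Finset (Fin d → ℤ)} (hsub : ∀ k ∈ S, ∀ m ∈ S, m - k ∈ T)
    (hnoAlias : ∀ n ∈ T, ∀ k ∈ S, ∀ m ∈ S, ∀ α, |(n + k - m) α| < M α)
    (f u v : (Fin d → ℤ) → ℂ) :
    ∑ K ∈ Fintype.piFinset (fun α => Ico (a α) (a α + M α)),
        (∑ n ∈ T, fourierMode (fun α => (M α : ℝ)) n (fun α => (K α : ℝ)) * f n) *
        (∑ k ∈ S, u k * fourierMode (fun α => (M α : ℝ)) k (fun α => (K α : ℝ))) *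
        starRingEnd ℂ (∑ m ∈ S, v m * fourierMode (fun α => (M α : ℝ)) m (fun α => (K α : ℝ))) =
      (∏ α, (M α : ℂ)) * ∑ m ∈ S, ∑ k ∈ S, u k * starRingEnd ℂ (v m) * f (m - k) := by
  set G := Fintype.piFinset (fun α => Ico (a α) (a α + M α))
  set e : (Fin d → ℤ) → (Fin d → ℤ) → ℂ :=
    fun n K => fourierMode (fun α => (M α : ℝ)) n (fun α => (K α : ℝ)) with he
  have hexpand : ∀ K, (∑ n ∈ T, e n K * f n) * (∑ k ∈ S, u k * e k K) *
      starRingEnd ℂ (∑ m ∈ S, v m * e m K) =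
      ∑ m ∈ S, ∑ k ∈ S, ∑ n ∈ T, u k * starRingEnd ℂ (v m) * f n * e (n + k - m) K := by
    intro K
    simp only [map_sum, map_mul, sum_mul, mul_sum]
    refine sum_congr rfl fun m _ => sum_congr rfl fun k _ => sum_congr rfl fun n _ => ?_
    simp only [he, conj_fourierMode, fourierMode_sub, fourierMode_add]
    ring
  have horth : ∀ m ∈ S, ∀ k ∈ S, ∀ n ∈ T,
      ∑ K ∈ G, e (n + k - m) K = if n = m - k then ∏ α, (M α : ℂ) else 0 := by
    intro m hm k hk n hn
    rw [sum_piFinset_fourierMode M hM]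
    refine if_congr ⟨fun hdvd => ?_, fun h => ?_⟩ rfl rfl
    · rw [← sub_eq_zero, sub_sub_eq_add_sub]
      exact funext fun α => Int.eq_zero_of_abs_lt_dvd (hdvd α) (hnoAlias n hn k hk m hm α)
    · simp [h]
  calc _ = ∑ m ∈ S, ∑ k ∈ S, ∑ n ∈ T,
        u k * starRingEnd ℂ (v m) * f n * ∑ K ∈ G, e (n + k - m) K := by
        rw [sum_congr rfl fun K _ => hexpand K, sum_comm]
        refine sum_congr rfl fun m _ => ?_
        rw [sum_comm]
        refine sum_congr rfl fun k _ => ?_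
        rw [sum_comm]
        simp only [mul_sum]
    _ = _ := by
        rw [mul_sum]
        refine sum_congr rfl fun m hm => ?_
        rw [mul_sum]
        refine sum_congr rfl fun k hk => ?_
        rw [sum_congr rfl fun n hn => by rw [horth m hm k hk n hn, mul_ite, mul_zero],
          sum_ite_eq', if_pos (hsub k hk m hm)]
        ring

/-- The Fourier-side form of `⟨A u, v⟩` for `u, v` with spectra in `S`. -/
noncomputable def fourierPairing {ι : Type*} [Fintype ι] (S : Finset (Fin d → ℤ))
    (Ahat : (Fin d → ℤ) → Matrix ι ι ℂ) (uc vc : (Fin d → ℤ) → ι → ℂ) : ℂ :=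
  ∑ i, ∑ j, ∑ m ∈ S, ∑ k ∈ S, uc k j * starRingEnd ℂ (vc m i) * Ahat (m - k) i j

theorem gridQuadrature_eq_fourierPairing {ι : Type*} [Fintype ι] (M : Fin d → ℕ)
    (hM : ∀ α, M α ≠ 0) (a : Fin d → ℤ) {S T : Finset (Fin d → ℤ)}
    (hsub : ∀ k ∈ S, ∀ m ∈ S, m - k ∈ T)
    (hnoAlias : ∀ n ∈ T, ∀ k ∈ S, ∀ m ∈ S, ∀ α, |(n + k - m) α| < M α)
    (Ahat : (Fin d → ℤ) → Matrix ι ι ℂ) (uc vc : (Fin d → ℤ) → ι → ℂ) :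
    (∏ α, (M α : ℂ))⁻¹ * ∑ K ∈ Fintype.piFinset (fun α => Ico (a α) (a α + M α)), ∑ i, ∑ j,
        (∑ n ∈ T, fourierMode (fun α => (M α : ℝ)) n (fun α => (K α : ℝ)) * Ahat n i j) *
        (∑ k ∈ S, uc k j * fourierMode (fun α => (M α : ℝ)) k (fun α => (K α : ℝ))) *
        starRingEnd ℂ
          (∑ m ∈ S, vc m i * fourierMode (fun α => (M α : ℝ)) m (fun α => (K α : ℝ))) =
      fourierPairing S Ahat uc vc := by
  have hprod : (∏ α, (M α : ℂ)) ≠ 0 := prod_ne_zero_iff.2 fun α _ => Nat.cast_ne_zero.2 (hM α)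
  rw [sum_comm, inv_mul_eq_iff_eq_mul₀ hprod, fourierPairing, mul_sum]
  refine sum_congr rfl fun i _ => ?_
  rw [sum_comm, mul_sum]
  exact sum_congr rfl fun j _ => sum_piFinset_fourierSeries_mul_mul_conj M hM a hsub hnoAlias
    (fun n => Ahat n i j) (fun k => uc k j) (fun m => vc m i)

theorem integral_eq_fourierPairing {ι : Type*} [Fintype ι] {μ : Measure (Fin d → ℝ)}
    (A : (Fin d → ℝ) → ι → ι → ℂ) (hA : ∀ i j, Integrable (fun x => A x i j) μ)
    (S : Finset (Fin d → ℤ)) (uc vc : (Fin d → ℤ) → ι → ℂ) (c : ℂ)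
    (Ahat : (Fin d → ℤ) → Matrix ι ι ℂ)
    (hAhat : ∀ n i j, Ahat n i j = c * ∫ x, A x i j * (fourierMode L n x)⁻¹ ∂μ) :
    c * ∫ x, ∑ i, ∑ j, A x i j * (∑ k ∈ S, uc k j * fourierMode L k x) *
        starRingEnd ℂ (∑ m ∈ S, vc m i * fourierMode L m x) ∂μ =
      fourierPairing S Ahat uc vc := by
  have hexpand : ∀ x, ∑ i, ∑ j, A x i j * (∑ k ∈ S, uc k j * fourierMode L k x) *
      starRingEnd ℂ (∑ m ∈ S, vc m i * fourierMode L m x) =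
      ∑ i, ∑ j, ∑ m ∈ S, ∑ k ∈ S,
        uc k j * starRingEnd ℂ (vc m i) * (A x i j * (fourierMode L (m - k) x)⁻¹) := by
    intro x
    simp only [map_sum, map_mul, sum_mul, mul_sum]
    refine sum_congr rfl fun i _ => sum_congr rfl fun j _ =>
      sum_congr rfl fun m _ => sum_congr rfl fun k _ => ?_
    rw [conj_fourierMode, fourierMode_sub, inv_div]
    ring
  have hint : ∀ n i j, Integrable (fun x => A x i j * (fourierMode L n x)⁻¹) μ :=
    fun n i j => (hA i j).mul_inv_fourierMode L n
  simp only [hexpand, fourierPairing, hAhat]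
  simp (disch := intro _ _; fun_prop) only [integral_finsetSum, integral_const_mul, mul_sum]
  simp only [mul_left_comm c]

end FourierModes

section FrequencyBoxes

variable {d : ℕ} {N : Fin d → ℕ} {ZdN Zd2N : Finset (Fin d → ℤ)}

theorem eq_piFinset_Ico_of_forall_mem_iff (hNpos : ∀ α, 0 < N α)
    (hZd2N : ∀ k : Fin d → ℤ, k ∈ Zd2N ↔
      ∀ α, -((2 * N α - 1 : ℕ) : ℤ) ≤ 2 * k α ∧ 2 * k α < ((2 * N α - 1 : ℕ) : ℤ)) :
    Zd2N = Fintype.piFinset fun α => Ico (1 - N α : ℤ) (1 - N α + (2 * N α - 1 : ℕ)) := by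
  ext k
  simp only [hZd2N, Fintype.mem_piFinset, mem_Ico]
  refine forall_congr' fun α => ?_
  have := hNpos α
  omega

variable (hZdN : ∀ k : Fin d → ℤ, k ∈ ZdN ↔ ∀ α, -(N α : ℤ) ≤ 2 * k α ∧ 2 * k α < (N α : ℤ))
  (hZd2N : ∀ k : Fin d → ℤ, k ∈ Zd2N ↔
    ∀ α, -((2 * N α - 1 : ℕ) : ℤ) ≤ 2 * k α ∧ 2 * k α < ((2 * N α - 1 : ℕ) : ℤ))
include hZdN hZd2N

theorem sub_mem_of_forall_mem_iff {k m : Fin d → ℤ} (hk : k ∈ ZdN) (hm : m ∈ ZdN) :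
    m - k ∈ Zd2N := by
  refine (hZd2N _).2 fun α => ?_
  have := (hZdN k).1 hk α
  have := (hZdN m).1 hm α
  simp only [Pi.sub_apply]
  omega

theorem abs_add_sub_lt_of_forall_mem_iff {n k m : Fin d → ℤ} (hn : n ∈ Zd2N) (hk : k ∈ ZdN)
    (hm : m ∈ ZdN) (α : Fin d) : |(n + k - m) α| < ((2 * N α - 1 : ℕ) : ℤ) := by
  have := (hZd2N n).1 hn α
  have := (hZdN k).1 hk α
  have := (hZdN m).1 hm α
  simp only [Pi.sub_apply, Pi.add_apply, abs_lt]
  omega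

end FrequencyBoxes

theorem stmt_19_general {d : ℕ} (Y : Fin d → ℝ) (hY : ∀ α, 0 < Y α)
    (N : Fin d → ℕ) (hNpos : ∀ α, 0 < N α)
    (cell : Set (Fin d → ℝ))
    (hcell : cell = Set.univ.pi fun α => Set.Ioo (-(Y α) / 2) (Y α / 2))
    (A : (Fin d → ℝ) → Matrix (Fin d) (Fin d) ℝ)
    (hAmeas : ∀ i j, Measurable fun x => A x i j)
    (hAbdd : ∃ C : ℝ, ∀ x i j, |A x i j| ≤ C)
    (ZdN Zd2N : Finset (Fin d → ℤ))
    (hZdN : ∀ k : Fin d → ℤ, k ∈ ZdN ↔ ∀ α, -(N α : ℤ) ≤ 2 * k α ∧ 2 * k α < (N α : ℤ))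
    (hZd2N : ∀ k : Fin d → ℤ, k ∈ Zd2N ↔
      ∀ α, -((2 * N α - 1 : ℕ) : ℤ) ≤ 2 * k α ∧ 2 * k α < ((2 * N α - 1 : ℕ) : ℤ))
    (uc vc : (Fin d → ℤ) → Fin d → ℂ)
    (uN vN : (Fin d → ℝ) → Fin d → ℂ)
    (huN : ∀ (x : Fin d → ℝ) (α : Fin d), uN x α = ∑ k ∈ ZdN, uc k α *
      Complex.exp (2 * Real.pi * Complex.I * ∑ β, (k β : ℂ) * (x β : ℂ) / (Y β : ℂ)))
    (hvN : ∀ (x : Fin d → ℝ) (α : Fin d), vN x α = ∑ k ∈ ZdN, vc k α *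
      Complex.exp (2 * Real.pi * Complex.I * ∑ β, (k β : ℂ) * (x β : ℂ) / (Y β : ℂ)))
    (Ahat : (Fin d → ℤ) → Matrix (Fin d) (Fin d) ℂ)
    (hAhat : ∀ n i j, Ahat n i j = (((∏ α, Y α)⁻¹ : ℝ) : ℂ) *
      ∫ x in cell, (A x i j : ℂ) *
        Complex.exp (-(2 * Real.pi * Complex.I * ∑ β, (n β : ℂ) * (x β : ℂ) / (Y β : ℂ))))
    (gridM : (Fin d → ℤ) → Fin d → ℝ)
    (hgrid : ∀ (k : Fin d → ℤ) (α : Fin d),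
      gridM k α = Y α * (k α : ℝ) / ((2 * N α - 1 : ℕ) : ℝ))
    (AM : (Fin d → ℤ) → Matrix (Fin d) (Fin d) ℂ)
    (hAM : ∀ (k : Fin d → ℤ) (i j : Fin d), AM k i j = ∑ n ∈ Zd2N,
      Complex.exp (2 * Real.pi * Complex.I *
        ∑ α, (k α : ℂ) * (n α : ℂ) / (((2 * N α - 1 : ℕ) : ℝ) : ℂ)) * Ahat n i j) :
    (((∏ α, Y α)⁻¹ : ℝ) : ℂ) *
        ∫ x in cell, ∑ α, ∑ β, (A x α β : ℂ) * uN x β * starRingEnd ℂ (vN x α) =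
      (∏ α, ((2 * N α - 1 : ℕ) : ℂ))⁻¹ * ∑ k ∈ Zd2N, ∑ α, ∑ β,
        AM k α β * uN (gridM k) β * starRingEnd ℂ (vN (gridM k) α) := by
  have hM : ∀ α, 2 * N α - 1 ≠ 0 := fun α => by have := hNpos α; omega
  have : IsFiniteMeasure (volume.restrict cell) := isFiniteMeasure_restrict.2 <| by
    rw [hcell]
    exact (Bornology.IsBounded.pi fun α => Metric.isBounded_Ioo _ _).measure_lt_top.ne
  obtain ⟨C, hC⟩ := hAbdd
  have hAint : ∀ i j, Integrable (fun x => (A x i j : ℂ)) (volume.restrict cell) := fun i j =>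
    .of_bound (Complex.measurable_ofReal.comp (hAmeas i j)).aestronglyMeasurable C
      (ae_of_all _ fun x => by simpa using hC x i j)
  have huN' : ∀ x α, uN x α = ∑ k ∈ ZdN, uc k α * fourierMode Y k x := huN
  have hvN' : ∀ x α, vN x α = ∑ k ∈ ZdN, vc k α * fourierMode Y k x := hvN
  have hgridMode : ∀ K k, fourierMode Y k (gridM K) =
      fourierMode (fun α => ((2 * N α - 1 : ℕ) : ℝ)) k (fun α => (K α : ℝ)) := fun K k =>
    fourierMode_of_grid _ _ _ hM (fun α => (hY α).ne') K k (hgrid K)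
  calc _ = fourierPairing ZdN Ahat uc vc := by
        simp only [huN', hvN']
        exact integral_eq_fourierPairing Y (fun x i j => (A x i j : ℂ)) hAint ZdN uc vc _ Ahat
          fun n i j => by simp only [hAhat, fourierMode, Complex.exp_neg]
    _ = _ := by
        rw [← gridQuadrature_eq_fourierPairing (fun α => 2 * N α - 1) hM (fun α => 1 - N α)
          (fun k hk m hm => sub_mem_of_forall_mem_iff hZdN hZd2N hk hm)
          (fun n hn k hk m hm => abs_add_sub_lt_of_forall_mem_iff hZdN hZd2N hn hk hm),
          ← eq_piFinset_Ico_of_forall_mem_iff hNpos hZd2N]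
        simp only [hAM, huN', hvN', hgridMode, fourierMode_natCast_intCast]

/-- Double-grid quadrature (odd grid): for trigonometric polynomials `u_N, v_N` of degree `N`
(real-valued, i.e. with Hermitian-symmetric coefficients) and `A ∈ L^∞_per(Y; ℝ^{d×d})`, the
exact integral `⟨A u_N, v_N⟩_{L²_#}` equals the discrete double-grid quadrature on the grid
with `2N−1` points: `(1/|2N−1|) Σ_{k ∈ Z^d_{2N−1}} ⟨A_{2N−1}^{kk} u_N(x_{2N−1}^k), v_N(x_{2N−1}^k)⟩`,
where `A_{2N−1}^{kk} = Σ_{n ∈ Z^d_{2N−1}} ω_{2N−1}^{kn} Â(n)` is built from the Fourier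
coefficients `Â(n)` of `A`. -/
theorem stmt_19 {d : ℕ} (Y : Fin d → ℝ) (hY : ∀ α, 0 < Y α)
    (N : Fin d → ℕ) (hNpos : ∀ α, 0 < N α) (hNodd : ∀ α, Odd (N α))
    (cell : Set (Fin d → ℝ))
    (hcell : cell = Set.univ.pi fun α => Set.Ioo (-(Y α) / 2) (Y α / 2))
    (A : (Fin d → ℝ) → Matrix (Fin d) (Fin d) ℝ)
    (hAmeas : ∀ i j, Measurable fun x => A x i j)
    (hAbdd : ∃ C : ℝ, ∀ x i j, |A x i j| ≤ C)
    (ZdN Zd2N : Finset (Fin d → ℤ))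
    (hZdN : ∀ k : Fin d → ℤ, k ∈ ZdN ↔ ∀ α, -(N α : ℤ) ≤ 2 * k α ∧ 2 * k α < (N α : ℤ))
    (hZd2N : ∀ k : Fin d → ℤ, k ∈ Zd2N ↔
      ∀ α, -((2 * N α - 1 : ℕ) : ℤ) ≤ 2 * k α ∧ 2 * k α < ((2 * N α - 1 : ℕ) : ℤ))
    (uc vc : (Fin d → ℤ) → Fin d → ℂ)
    (hu : ∀ k α, uc (-k) α = starRingEnd ℂ (uc k α))
    (hv : ∀ k α, vc (-k) α = starRingEnd ℂ (vc k α))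
    (uN vN : (Fin d → ℝ) → Fin d → ℂ)
    (huN : ∀ (x : Fin d → ℝ) (α : Fin d), uN x α = ∑ k ∈ ZdN, uc k α *
      Complex.exp (2 * Real.pi * Complex.I * ∑ β, (k β : ℂ) * (x β : ℂ) / (Y β : ℂ)))
    (hvN : ∀ (x : Fin d → ℝ) (α : Fin d), vN x α = ∑ k ∈ ZdN, vc k α *
      Complex.exp (2 * Real.pi * Complex.I * ∑ β, (k β : ℂ) * (x β : ℂ) / (Y β : ℂ)))
    (Ahat : (Fin d → ℤ) → Matrix (Fin d) (Fin d) ℂ)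
    (hAhat : ∀ n i j, Ahat n i j = (((∏ α, Y α)⁻¹ : ℝ) : ℂ) *
      ∫ x in cell, (A x i j : ℂ) *
        Complex.exp (-(2 * Real.pi * Complex.I * ∑ β, (n β : ℂ) * (x β : ℂ) / (Y β : ℂ))))
    (gridM : (Fin d → ℤ) → Fin d → ℝ)
    (hgrid : ∀ (k : Fin d → ℤ) (α : Fin d),
      gridM k α = Y α * (k α : ℝ) / ((2 * N α - 1 : ℕ) : ℝ))
    (AM : (Fin d → ℤ) → Matrix (Fin d) (Fin d) ℂ)
    (hAM : ∀ (k : Fin d → ℤ) (i j : Fin d), AM k i j = ∑ n ∈ Zd2N,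
      Complex.exp (2 * Real.pi * Complex.I *
        ∑ α, (k α : ℂ) * (n α : ℂ) / (((2 * N α - 1 : ℕ) : ℝ) : ℂ)) * Ahat n i j) :
    (((∏ α, Y α)⁻¹ : ℝ) : ℂ) *
        ∫ x in cell, ∑ α, ∑ β, (A x α β : ℂ) * uN x β * starRingEnd ℂ (vN x α) =
      (∏ α, ((2 * N α - 1 : ℕ) : ℂ))⁻¹ * ∑ k ∈ Zd2N, ∑ α, ∑ β,
        AM k α β * uN (gridM k) β * starRingEnd ℂ (vN (gridM k) α) :=
  stmt_19_general Y hY N hNpos cell hcell A hAmeas hAbdd ZdN Zd2N hZdN hZd2N uc vc uN vN huN hvN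
    Ahat hAhat gridM hgrid AM hAM
end
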